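/- Let B ⊆ ℝ³ be open and connected, and let ζ : B × [0,∞) → ℝ³ be such that for each t ≥ 0 the map ζ(·, t) is continuously differentiable, injective, with det Dₓζ(x, t) > 0 for all x ∈ B, and suppose the right Cauchy–Green tensor is independent of time: (Dₓζ(x, t))ᵀ Dₓζ(x, t) = (Dₓζ(x, 0))ᵀ Dₓζ(x, 0) for all x ∈ B and t ≥ 0. Then the motion is rigid: for each t ≥ 0 there exist a unique rotation R(t) ∈ SO(3) and a unique vector b(t) ∈ ℝ³ such that ζ(x, t) = R(t) ζ(x, 0) + b(t) for all x ∈ B. Moreover, if for each x ∈ B the curve t ↦ ζ(x, t) is C² in t, then t ↦ R(t) and t ↦ b(t) are C². -/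

import Mathlib

/-
Write `f = ζ(·, t)` and `g = ζ(·, 0)`. Equality of the Cauchy–Green tensors says that `Df(x)` and
`Dg(x)` give every vector the same Euclidean length. Near a point, `f ∘ g⁻¹` (inverse function
theorem) then has linear isometries as derivatives, so by the mean value inequality it is
1-Lipschitz, and so is `g ∘ f⁻¹`: `f` and `g` have the same mutual distances on a neighbourhood.
Since `g` maps that neighbourhood onto a neighbourhood, polarization turns this into
`f = Q g + c` there, with `Q` orthogonal. As `Q = Df(x) Dg(x)⁻¹` at every such point, the pair
`(Q, c)` is locally constant on `B`, hence constant because `B` is connected, and `det Q > 0`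
makes `Q` a rotation. Finally `Q` and `c` can be read off from the values of `f` at `x₀` and at
three points that `g` maps to `g x₀ + ε eⱼ`; this gives uniqueness, and the `C²` dependence on `t`.
-/

open Matrix

/-- The Jacobian matrix (with respect to the space variable, within `B`) of a
configuration `ζ : B → ℝ³` at `x`. -/
noncomputable def jacobianMat (B : Set (Fin 3 → ℝ))
    (ζ : (Fin 3 → ℝ) → (Fin 3 → ℝ)) (x : Fin 3 → ℝ) : Matrix (Fin 3) (Fin 3) ℝ :=
  Matrix.of fun i j => fderivWithin ℝ ζ B x (Pi.single j 1) i

open Filter Topology Metric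
open scoped RealInnerProductSpace

theorem exists_pos_forall_add_smul_mem {ι E : Type*} [Finite ι] [NormedAddCommGroup E]
    [NormedSpace ℝ E] {s : Set E} {y : E} (hs : s ∈ 𝓝 y) (v : ι → E) :
    ∃ ε : ℝ, 0 < ε ∧ ∀ i, y + ε • v i ∈ s := by
  have h : ∀ᶠ ε in 𝓝 (0 : ℝ), ∀ i, y + ε • v i ∈ s := eventually_all.2 fun i =>
    ((continuous_const.add (continuous_id.smul continuous_const)).tendsto' 0 y
      (by simp)).eventually hs
  obtain ⟨ε, hεs, hε⟩ := (h.filter_mono (nhdsWithin_le_nhds (s := Set.Ioi 0))).and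
    self_mem_nhdsWithin |>.exists
  exact ⟨ε, hε, hεs⟩

section InverseFunction

variable {E F G : Type*} [NormedAddCommGroup E] [NormedSpace ℝ E]
  [NormedAddCommGroup F] [NormedSpace ℝ F] [NormedAddCommGroup G] [NormedSpace ℝ G]

theorem ContDiffAt.exists_hasStrictFDerivAt_equiv {g : E → F} {x₀ : E}
    (hg : ContDiffAt ℝ 1 g x₀) (hinv : (fderiv ℝ g x₀).IsInvertible) :
    ∃ g' : E ≃L[ℝ] F, HasStrictFDerivAt g (g' : E →L[ℝ] F) x₀ := by
  obtain ⟨g', hg'⟩ := hinv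
  exact ⟨g', hg' ▸ hg.hasStrictFDerivAt one_ne_zero⟩

variable [CompleteSpace E]

theorem ContDiffAt.image_mem_nhds {g : E → F} {x₀ : E} {s : Set E}
    (hg : ContDiffAt ℝ 1 g x₀) (hinv : (fderiv ℝ g x₀).IsInvertible) (hs : s ∈ 𝓝 x₀) :
    g '' s ∈ 𝓝 (g x₀) := by
  obtain ⟨g', hg'⟩ := hg.exists_hasStrictFDerivAt_equiv hinv
  exact hg'.map_nhds_eq_of_equiv ▸ image_mem_map hs

theorem eventually_norm_sub_le_of_norm_fderiv_le {f : E → G} {g : E → F} {x₀ : E}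
    (hg : ContDiffAt ℝ 1 g x₀)
    (hderiv : ∀ᶠ x in 𝓝 x₀, DifferentiableAt ℝ f x ∧ DifferentiableAt ℝ g x ∧
      (fderiv ℝ g x).IsInvertible ∧ ∀ v, ‖fderiv ℝ f x v‖ ≤ ‖fderiv ℝ g x v‖) :
    ∀ᶠ p in 𝓝 x₀ ×ˢ 𝓝 x₀, ‖f p.1 - f p.2‖ ≤ ‖g p.1 - g p.2‖ := by
  obtain ⟨g₀', hg₀'⟩ := hg.exists_hasStrictFDerivAt_equiv hderiv.self_of_nhds.2.2.1
  set P := hg₀'.toOpenPartialHomeomorph g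
  have hx₀ : x₀ ∈ P.source := hg₀'.mem_toOpenPartialHomeomorph_source
  have hy₀ : g x₀ ∈ P.target := hg₀'.image_mem_toOpenPartialHomeomorph_target
  have hPx₀ : P.symm (g x₀) = x₀ := P.left_inv hx₀
  have hφ : ∀ᶠ y in 𝓝 (g x₀), DifferentiableAt ℝ (f ∘ P.symm) y ∧
      ‖fderiv ℝ (f ∘ P.symm) y‖ ≤ 1 := by
    filter_upwards [P.open_target.mem_nhds hy₀,
      (P.continuousAt_symm hy₀).preimage_mem_nhds (hPx₀ ▸ hderiv)]
      with y hyP ⟨hf, hg, ⟨g', hg'⟩, hle⟩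
    have hPy : HasFDerivAt P.symm (g'.symm : F →L[ℝ] E) y :=
      P.hasFDerivAt_symm hyP (hg' ▸ hg.hasFDerivAt)
    have hφy := hf.hasFDerivAt.comp y hPy
    refine ⟨hφy.differentiableAt, hφy.fderiv ▸ ?_⟩
    refine ContinuousLinearMap.opNorm_le_bound _ zero_le_one fun w => ?_
    simpa [← hg'] using hle (g'.symm w)
  obtain ⟨ρ, hρ, hball⟩ := eventually_nhds_iff_ball.1 hφ
  have hnear : ∀ᶠ x in 𝓝 x₀, g x ∈ ball (g x₀) ρ ∧ P.symm (g x) = x :=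
    (hg.continuousAt.eventually (ball_mem_nhds _ hρ)).and (P.eventually_left_inverse hx₀)
  refine eventually_prod_self_iff'.2 ⟨_, hnear, fun x hx y hy => ?_⟩
  have := (convex_ball (g x₀) ρ).norm_image_sub_le_of_norm_fderiv_le
    (fun z hz => (hball z hz).1) (fun z hz => (hball z hz).2) hy.1 hx.1
  simpa [hx.2, hy.2] using this

theorem eventually_norm_sub_eq_of_norm_fderiv_eq {f : E → G} {g : E → F} {x₀ : E}
    (hf : ContDiffAt ℝ 1 f x₀) (hg : ContDiffAt ℝ 1 g x₀)
    (hderiv : ∀ᶠ x in 𝓝 x₀, (fderiv ℝ f x).IsInvertible ∧ (fderiv ℝ g x).IsInvertible ∧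
      ∀ v, ‖fderiv ℝ f x v‖ = ‖fderiv ℝ g x v‖) :
    ∀ᶠ p in 𝓝 x₀ ×ˢ 𝓝 x₀, ‖f p.1 - f p.2‖ = ‖g p.1 - g p.2‖ := by
  have hfd := (hf.eventually (by simp)).mono fun _ h => h.differentiableAt one_ne_zero
  have hgd := (hg.eventually (by simp)).mono fun _ h => h.differentiableAt one_ne_zero
  have hle := eventually_norm_sub_le_of_norm_fderiv_le hg <| by
    filter_upwards [hfd, hgd, hderiv] with x hfx hgx ⟨_, hgi, heq⟩
    exact ⟨hfx, hgx, hgi, fun v => (heq v).le⟩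
  have hge := eventually_norm_sub_le_of_norm_fderiv_le hf <| by
    filter_upwards [hfd, hgd, hderiv] with x hfx hgx ⟨hfi, _, heq⟩
    exact ⟨hgx, hfx, hfi, fun v => (heq v).ge⟩
  exact hle.and hge |>.mono fun _ h => le_antisymm h.1 h.2

end InverseFunction

section Isometry

variable {X E F : Type*} [NormedAddCommGroup E] [InnerProductSpace ℝ E] [FiniteDimensional ℝ E]
  [NormedAddCommGroup F] [InnerProductSpace ℝ F]

omit [FiniteDimensional ℝ E] in
theorem inner_sub_eq_of_norm_sub_eq {f : X → F} {g : X → E} {S : Set X}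
    (hdist : ∀ x ∈ S, ∀ y ∈ S, ‖f x - f y‖ = ‖g x - g y‖) {x₀ x y : X}
    (hx₀ : x₀ ∈ S) (hx : x ∈ S) (hy : y ∈ S) :
    ⟪f x - f x₀, f y - f x₀⟫ = ⟪g x - g x₀, g y - g x₀⟫ := by
  have hf := norm_sub_sq_real (f x - f x₀) (f y - f x₀)
  have hg := norm_sub_sq_real (g x - g x₀) (g y - g x₀)
  rw [sub_sub_sub_cancel_right] at hf hg
  rw [hdist x hx y hy, hdist x hx x₀ hx₀, hdist y hy x₀ hx₀] at hf
  linarith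

theorem exists_linearIsometry_of_norm_sub_eq {f : X → F} {g : X → E} {S : Set X} {x₀ : X}
    (hx₀ : x₀ ∈ S) (hdist : ∀ x ∈ S, ∀ y ∈ S, ‖f x - f y‖ = ‖g x - g y‖)
    (himage : g '' S ∈ 𝓝 (g x₀)) :
    ∃ L : E →ₗᵢ[ℝ] F, ∀ x ∈ S, f x = L (g x - g x₀) + f x₀ := by
  set b := stdOrthonormalBasis ℝ E
  obtain ⟨ε, hε, hmem⟩ := exists_pos_forall_add_smul_mem himage b
  choose xs hxsS hgxs using hmem
  set w := fun i => ε⁻¹ • (f (xs i) - f x₀)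
  have hw : ∀ x ∈ S, ∀ i, ⟪f x - f x₀, w i⟫ = ⟪g x - g x₀, b i⟫ := fun x hx i => by
    rw [real_inner_smul_right, inner_sub_eq_of_norm_sub_eq hdist hx₀ hx (hxsS i), hgxs i,
      add_sub_cancel_left, real_inner_smul_right, inv_mul_cancel_left₀ hε.ne']
  have hwb : ∀ i, b.toBasis.constr ℝ w (b i) = w i := fun i => by
    rw [← b.coe_toBasis, Module.Basis.constr_basis]
  have horth : Orthonormal ℝ (b.toBasis.constr ℝ w ∘ b.toBasis) := by
    rw [orthonormal_iff_ite]
    intro i j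
    simp only [Function.comp_apply, b.coe_toBasis, hwb]
    rw [real_inner_smul_left, hw _ (hxsS i), hgxs i, add_sub_cancel_left, real_inner_smul_left,
      inv_mul_cancel_left₀ hε.ne', orthonormal_iff_ite.1 b.orthonormal]
  set L := (b.toBasis.constr ℝ w).isometryOfOrthonormal
    (by simpa only [b.coe_toBasis] using b.orthonormal) horth
  have hL : ∀ x ∈ S, ∀ u, ⟪f x - f x₀, L u⟫ = ⟪g x - g x₀, u⟫ := fun x hx u => by
    have := b.toBasis.ext (f₁ := (innerₛₗ ℝ (f x - f x₀)).comp L.toLinearMap)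
      (f₂ := innerₛₗ ℝ (g x - g x₀)) fun i => by
        simpa only [b.coe_toBasis, LinearMap.comp_apply, innerₛₗ_apply_apply, L,
          LinearIsometry.coe_toLinearMap, LinearMap.coe_isometryOfOrthonormal, hwb]
          using hw x hx i
    exact LinearMap.congr_fun this u
  refine ⟨L, fun x hx => ?_⟩
  -- `‖a - L v‖² = ‖a‖² - 2 ⟪a, L v⟫ + ‖L v‖² = ‖v‖² - 2 ‖v‖² + ‖v‖²`
  rw [← sub_eq_iff_eq_add, ← sub_eq_zero, ← norm_eq_zero, ← sq_eq_zero_iff, norm_sub_sq_real,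
    hL x hx, L.norm_map, hdist x hx x₀ hx₀, real_inner_self_eq_norm_sq]
  ring

end Isometry

theorem IsPreconnected.apply_eq_of_eventually_eq {X Y : Type*} [TopologicalSpace X] {s : Set X}
    (hs : IsPreconnected s) {u : X → Y} (hu : ∀ x ∈ s, ∀ᶠ y in 𝓝 x, u y = u x) {x y : X}
    (hx : x ∈ s) (hy : y ∈ s) : u x = u y := by
  have := isPreconnected_iff_preconnectedSpace.1 hs
  have : IsLocallyConstant fun z : s => u z := (IsLocallyConstant.iff_eventually_eq _).2 fun z =>
    (continuous_subtype_val.tendsto z).eventually (hu z z.2)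
  exact this.apply_eq_of_preconnectedSpace ⟨x, hx⟩ ⟨y, hy⟩

section RealMatrix

variable {n : Type*} [Fintype n] [DecidableEq n]

theorem Matrix.norm_toEuclideanCLM_apply_eq {M N : Matrix n n ℝ} (h : Mᵀ * M = Nᵀ * N)
    (v : EuclideanSpace ℝ n) :
    ‖toEuclideanCLM (n := n) (𝕜 := ℝ) M v‖ = ‖toEuclideanCLM (n := n) (𝕜 := ℝ) N v‖ := by
  have h' : star (toEuclideanCLM (n := n) (𝕜 := ℝ) M) * toEuclideanCLM (n := n) (𝕜 := ℝ) M =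
      star (toEuclideanCLM (n := n) (𝕜 := ℝ) N) * toEuclideanCLM (n := n) (𝕜 := ℝ) N := by
    rw [← map_star, ← map_star, ← map_mul, ← map_mul, star_eq_conjTranspose,
      star_eq_conjTranspose, conjTranspose_eq_transpose_of_trivial,
      conjTranspose_eq_transpose_of_trivial, h]
  rw [← sq_eq_sq₀ (norm_nonneg _) (norm_nonneg _),
    ContinuousLinearMap.apply_norm_sq_eq_inner_adjoint_left,
    ContinuousLinearMap.apply_norm_sq_eq_inner_adjoint_left, ← ContinuousLinearMap.star_eq_adjoint,
    ← ContinuousLinearMap.star_eq_adjoint, ← ContinuousLinearMap.mul_def,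
    ← ContinuousLinearMap.mul_def, h']

theorem Matrix.transpose_mul_self_eq_one_of_norm_toEuclideanCLM_apply {Q : Matrix n n ℝ}
    (h : ∀ v, ‖toEuclideanCLM (n := n) (𝕜 := ℝ) Q v‖ = ‖v‖) : Qᵀ * Q = 1 := by
  apply EquivLike.injective (toEuclideanCLM (n := n) (𝕜 := ℝ))
  rw [map_mul, map_one, ← conjTranspose_eq_transpose_of_trivial, ← star_eq_conjTranspose, map_star,
    ContinuousLinearMap.star_eq_adjoint]
  exact (ContinuousLinearMap.norm_map_iff_adjoint_comp_self _).1 h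

theorem Matrix.det_eq_one_of_transpose_mul_self_eq_one_of_pos {Q : Matrix n n ℝ} (hQ : Qᵀ * Q = 1)
    (hdet : 0 < Q.det) : Q.det = 1 := by
  have : Q.det ^ 2 = 1 := by
    simpa [sq, det_transpose] using congrArg det hQ
  nlinarith

theorem Matrix.eq_finiteDifference_of_forall_eq_mulVec_add {X m : Type*} {B : Set X}
    {u : X → m → ℝ} {g : X → n → ℝ} {x₀ : X} {xs : n → X} {ε : ℝ} (hx₀ : x₀ ∈ B)
    (hxs : ∀ j, xs j ∈ B) (hε : ε ≠ 0) (hgxs : ∀ j, g (xs j) = g x₀ + ε • Pi.single j 1)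
    {Q : Matrix m n ℝ} {c : m → ℝ} (h : ∀ x ∈ B, u x = Q *ᵥ g x + c) :
    Q = of (fun i j => (u (xs j) i - u x₀ i) / ε) ∧
      c = u x₀ - of (fun i j => (u (xs j) i - u x₀ i) / ε) *ᵥ g x₀ := by
  have hQ : Q = of (fun i j => (u (xs j) i - u x₀ i) / ε) := by
    ext i j
    simp [h _ (hxs j), h x₀ hx₀, hgxs j, mulVec_add, mulVec_smul, hε]
  refine ⟨hQ, ?_⟩
  rw [← hQ, h x₀ hx₀, add_sub_cancel_left]

end RealMatrix

section Jacobian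

variable {B : Set (Fin 3 → ℝ)} {u : (Fin 3 → ℝ) → (Fin 3 → ℝ)} {x : Fin 3 → ℝ}

theorem jacobianMat_eq_toMatrix' (hB : B ∈ 𝓝 x) :
    jacobianMat B u x = LinearMap.toMatrix' (fderiv ℝ u x : (Fin 3 → ℝ) →ₗ[ℝ] Fin 3 → ℝ) := by
  ext i j
  simp [jacobianMat, LinearMap.toMatrix'_apply, fderivWithin_of_mem_nhds hB]

theorem fderiv_apply_eq_jacobianMat_mulVec (hB : B ∈ 𝓝 x) (v : Fin 3 → ℝ) :
    fderiv ℝ u x v = jacobianMat B u x *ᵥ v := by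
  rw [jacobianMat_eq_toMatrix' hB, ← Matrix.toLin'_apply, Matrix.toLin'_toMatrix']
  rfl

theorem isInvertible_fderiv_of_det_jacobianMat_ne_zero (hB : B ∈ 𝓝 x)
    (h : (jacobianMat B u x).det ≠ 0) : (fderiv ℝ u x).IsInvertible := by
  rw [jacobianMat_eq_toMatrix' hB, LinearMap.det_toMatrix'] at h
  exact ⟨_, (fderiv ℝ u x).coe_toContinuousLinearEquivOfDetNeZero h⟩

theorem jacobianMat_eq_mul_of_eventuallyEq (hB : B ∈ 𝓝 x) {g : (Fin 3 → ℝ) → (Fin 3 → ℝ)}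
    (hg : DifferentiableAt ℝ g x) {Q : Matrix (Fin 3) (Fin 3) ℝ} {c : Fin 3 → ℝ}
    (h : u =ᶠ[𝓝 x] fun y => Q *ᵥ g y + c) : jacobianMat B u x = Q * jacobianMat B g x := by
  have hQ : HasFDerivAt (fun y => Q *ᵥ g y + c)
      ((Matrix.toLin' Q).toContinuousLinearMap ∘L fderiv ℝ g x) x :=
    ((Matrix.toLin' Q).toContinuousLinearMap.hasFDerivAt.comp x hg.hasFDerivAt).add_const c
  rw [jacobianMat_eq_toMatrix' hB, jacobianMat_eq_toMatrix' hB, h.fderiv_eq, hQ.fderiv,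
    ContinuousLinearMap.toLinearMap_comp, LinearMap.toMatrix'_comp]
  simp

end Jacobian

theorem exists_eventually_eq_mulVec_add_of_transpose_mul_self_eq {B : Set (Fin 3 → ℝ)}
    (hB : IsOpen B) {f g : (Fin 3 → ℝ) → (Fin 3 → ℝ)}
    (hf : ContDiffOn ℝ 1 f B) (hg : ContDiffOn ℝ 1 g B)
    (hfdet : ∀ x ∈ B, (jacobianMat B f x).det ≠ 0) (hgdet : ∀ x ∈ B, (jacobianMat B g x).det ≠ 0)
    (hCG : ∀ x ∈ B, (jacobianMat B f x)ᵀ * jacobianMat B f x =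
      (jacobianMat B g x)ᵀ * jacobianMat B g x)
    {x₀ : Fin 3 → ℝ} (hx₀ : x₀ ∈ B) :
    ∃ (Q : Matrix (Fin 3) (Fin 3) ℝ) (c : Fin 3 → ℝ), Qᵀ * Q = 1 ∧
      ∀ᶠ x in 𝓝 x₀, f x = Q *ᵥ g x + c := by
  -- `Fin 3 → ℝ` carries the sup norm; only the norm of the target matters, so we make it Euclidean.
  set e := (EuclideanSpace.equiv (Fin 3) ℝ).symm
  have hsmooth : ∀ {u : (Fin 3 → ℝ) → (Fin 3 → ℝ)}, ContDiffOn ℝ 1 u B → ∀ x ∈ B,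
      ContDiffAt ℝ 1 (e ∘ u) x := fun hu x hx =>
    e.contDiff.comp_contDiffAt x (hu.contDiffAt (hB.mem_nhds hx))
  have hderiv : ∀ (u : (Fin 3 → ℝ) → (Fin 3 → ℝ)), ∀ x ∈ B, ∀ v,
      fderiv ℝ (e ∘ u) x v = toEuclideanCLM (n := Fin 3) (𝕜 := ℝ) (jacobianMat B u x) (e v) :=
    fun u x hx v => by
      rw [e.comp_fderiv, ContinuousLinearMap.comp_apply,
        fderiv_apply_eq_jacobianMat_mulVec (hB.mem_nhds hx)]
      rfl
  have hinv : ∀ (u : (Fin 3 → ℝ) → (Fin 3 → ℝ)), ∀ x ∈ B, (jacobianMat B u x).det ≠ 0 →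
      (fderiv ℝ (e ∘ u) x).IsInvertible := fun u x hx hdet => by
    rw [e.comp_fderiv, ContinuousLinearMap.isInvertible_equiv_comp]
    exact isInvertible_fderiv_of_det_jacobianMat_ne_zero (hB.mem_nhds hx) hdet
  obtain ⟨U, hU, hdist⟩ := eventually_prod_self_iff'.1 <|
    eventually_norm_sub_eq_of_norm_fderiv_eq (hsmooth hf x₀ hx₀) (hsmooth hg x₀ hx₀) <| by
      filter_upwards [hB.mem_nhds hx₀] with x hx
      refine ⟨hinv f x hx (hfdet x hx), hinv g x hx (hgdet x hx), fun v => ?_⟩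
      rw [hderiv f x hx, hderiv g x hx]
      exact norm_toEuclideanCLM_apply_eq (hCG x hx) _
  obtain ⟨L, hL⟩ := exists_linearIsometry_of_norm_sub_eq (mem_of_mem_nhds hU) hdist
    ((hsmooth hg x₀ hx₀).image_mem_nhds (hinv g x₀ hx₀ (hgdet x₀ hx₀)) hU)
  set Q := (toEuclideanCLM (n := Fin 3) (𝕜 := ℝ)).symm L.toContinuousLinearMap
  have hQ : toEuclideanCLM (n := Fin 3) (𝕜 := ℝ) Q = L.toContinuousLinearMap :=
    StarAlgEquiv.apply_symm_apply _ _
  refine ⟨Q, f x₀ - Q *ᵥ g x₀,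
    transpose_mul_self_eq_one_of_norm_toEuclideanCLM_apply (by simp [hQ]), ?_⟩
  filter_upwards [hU] with x hx
  have := congrArg WithLp.ofLp (hL x hx)
  rw [← LinearIsometry.coe_toContinuousLinearMap, ← hQ] at this
  simp only [e, Function.comp_apply, PiLp.continuousLinearEquiv_symm_apply, map_sub,
    toEuclideanCLM_toLp, WithLp.ofLp_add, WithLp.ofLp_sub] at this
  rw [this]
  abel

theorem exists_eq_mulVec_add_of_transpose_mul_self_eq {B : Set (Fin 3 → ℝ)}
    (hB : IsOpen B) (hBconn : IsConnected B) {f g : (Fin 3 → ℝ) → (Fin 3 → ℝ)}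
    (hf : ContDiffOn ℝ 1 f B) (hg : ContDiffOn ℝ 1 g B)
    (hfdet : ∀ x ∈ B, 0 < (jacobianMat B f x).det) (hgdet : ∀ x ∈ B, 0 < (jacobianMat B g x).det)
    (hCG : ∀ x ∈ B, (jacobianMat B f x)ᵀ * jacobianMat B f x =
      (jacobianMat B g x)ᵀ * jacobianMat B g x) :
    ∃ (Q : Matrix (Fin 3) (Fin 3) ℝ) (c : Fin 3 → ℝ), Qᵀ * Q = 1 ∧ Q.det = 1 ∧
      ∀ x ∈ B, f x = Q *ᵥ g x + c := by
  -- The only candidate for the local rotation at `x`, and the translation it forces.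
  set q : (Fin 3 → ℝ) → Matrix (Fin 3) (Fin 3) ℝ × (Fin 3 → ℝ) := fun x =>
    (jacobianMat B f x * (jacobianMat B g x)⁻¹,
      f x - (jacobianMat B f x * (jacobianMat B g x)⁻¹) *ᵥ g x)
  have hq : ∀ x ∈ B, (q x).1ᵀ * (q x).1 = 1 ∧ ∀ᶠ y in 𝓝 x, q y = q x := by
    intro x hx
    obtain ⟨Q, c, hQ, hfg⟩ := exists_eventually_eq_mulVec_add_of_transpose_mul_self_eq hB hf hg
      (fun x hx => (hfdet x hx).ne') (fun x hx => (hgdet x hx).ne') hCG hx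
    have hqQ : ∀ᶠ y in 𝓝 x, q y = (Q, c) := by
      filter_upwards [hfg.eventually_nhds, hB.mem_nhds hx] with y hy hyB
      have hJ := jacobianMat_eq_mul_of_eventuallyEq (hB.mem_nhds hyB)
        ((hg.contDiffAt (hB.mem_nhds hyB)).differentiableAt one_ne_zero) hy
      have hQy : jacobianMat B f y * (jacobianMat B g y)⁻¹ = Q := by
        rw [hJ, Matrix.mul_nonsing_inv_cancel_right _ _ (hgdet y hyB).ne'.isUnit]
      simp [q, hQy, hy.self_of_nhds]
    rw [hqQ.self_of_nhds]
    exact ⟨hQ, hqQ⟩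
  obtain ⟨x₀, hx₀⟩ := hBconn.nonempty
  have hconst : ∀ x ∈ B, q x = q x₀ := fun x hx =>
    hBconn.isPreconnected.apply_eq_of_eventually_eq (fun x hx => (hq x hx).2) hx hx₀
  refine ⟨(q x₀).1, (q x₀).2, (hq x₀ hx₀).1, det_eq_one_of_transpose_mul_self_eq_one_of_pos
    (hq x₀ hx₀).1 ?_, fun x hx => ?_⟩
  · simp only [q, det_mul, det_nonsing_inv, Ring.inverse_eq_inv']
    exact mul_pos (hfdet x₀ hx₀) (inv_pos.2 (hgdet x₀ hx₀))
  · rw [← hconst x hx]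
    exact (add_sub_cancel _ _).symm

/-- If a motion `ζ(·, t)` of an open connected body `B ⊆ ℝ³` consists of `C¹`, injective,
orientation-preserving configurations whose right Cauchy–Green tensor is independent of
time, then the motion is rigid: `ζ(x, t) = R(t) ζ(x, 0) + b(t)` with `R(t) ∈ SO(3)` and
`b(t) ∈ ℝ³` uniquely determined; moreover if `t ↦ ζ(x, t)` is `C²` for every `x ∈ B`,
then so are `R` and `b`. -/
theorem rigid_motion
    (B : Set (Fin 3 → ℝ)) (hB : IsOpen B) (hBconn : IsConnected B)
    (ζ : ℝ → (Fin 3 → ℝ) → (Fin 3 → ℝ))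
    (hreg : ∀ t : ℝ, 0 ≤ t → ContDiffOn ℝ 1 (ζ t) B ∧ Set.InjOn (ζ t) B ∧
      ∀ x ∈ B, 0 < (jacobianMat B (ζ t) x).det)
    (hCG : ∀ t : ℝ, 0 ≤ t → ∀ x ∈ B,
      (jacobianMat B (ζ t) x)ᵀ * jacobianMat B (ζ t) x =
      (jacobianMat B (ζ 0) x)ᵀ * jacobianMat B (ζ 0) x) :
    ∃ (R : ℝ → Matrix (Fin 3) (Fin 3) ℝ) (b : ℝ → (Fin 3 → ℝ)),
      (∀ t : ℝ, 0 ≤ t → ((R t)ᵀ * R t = 1 ∧ (R t).det = 1) ∧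
        ∀ x ∈ B, ζ t x = (R t).mulVec (ζ 0 x) + b t) ∧
      (∀ t : ℝ, 0 ≤ t → ∀ (R' : Matrix (Fin 3) (Fin 3) ℝ) (b' : Fin 3 → ℝ),
        (R'ᵀ * R' = 1 ∧ R'.det = 1) → (∀ x ∈ B, ζ t x = R'.mulVec (ζ 0 x) + b') →
        R' = R t ∧ b' = b t) ∧
      ((∀ x ∈ B, ContDiffOn ℝ 2 (fun t => ζ t x) (Set.Ici (0:ℝ))) →
        (∀ i j : Fin 3, ContDiffOn ℝ 2 (fun t => R t i j) (Set.Ici (0:ℝ))) ∧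
        ∀ i : Fin 3, ContDiffOn ℝ 2 (fun t => b t i) (Set.Ici (0:ℝ))) := by
  obtain ⟨hg, -, hgdet⟩ := hreg 0 le_rfl
  obtain ⟨x₀, hx₀⟩ := hBconn.nonempty
  have himage : ζ 0 '' B ∈ 𝓝 (ζ 0 x₀) := (hg.contDiffAt (hB.mem_nhds hx₀)).image_mem_nhds
    (isInvertible_fderiv_of_det_jacobianMat_ne_zero (hB.mem_nhds hx₀) (hgdet x₀ hx₀).ne')
    (hB.mem_nhds hx₀)
  obtain ⟨ε, hε, hmem⟩ := exists_pos_forall_add_smul_mem himage fun j => Pi.single j 1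
  choose xs hxsB hgxs using hmem
  -- `R t` and `b t` are read off from `ζ t` at four fixed points, hence are `C²` in `t`.
  set R : ℝ → Matrix (Fin 3) (Fin 3) ℝ := fun t => of fun i j => (ζ t (xs j) i - ζ t x₀ i) / ε
  set b : ℝ → (Fin 3 → ℝ) := fun t => ζ t x₀ - R t *ᵥ ζ 0 x₀
  have hRb : ∀ t Q c, (∀ x ∈ B, ζ t x = Q *ᵥ ζ 0 x + c) → Q = R t ∧ c = b t := fun t _ _ h =>
    eq_finiteDifference_of_forall_eq_mulVec_add hx₀ hxsB hε.ne' hgxs h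
  refine ⟨R, b, fun t ht => ?_, fun t _ R' b' _ h => hRb t R' b' h, fun hsm => ?_⟩
  · obtain ⟨hf, -, hfdet⟩ := hreg t ht
    obtain ⟨Q, c, hQ, hdet, hQc⟩ :=
      exists_eq_mulVec_add_of_transpose_mul_self_eq hB hBconn hf hg hfdet hgdet (hCG t ht)
    obtain ⟨hQR, hcb⟩ := hRb t Q c hQc
    exact ⟨⟨hQR ▸ hQ, hQR ▸ hdet⟩, hQR ▸ hcb ▸ hQc⟩
  · have hζ : ∀ x ∈ B, ∀ i, ContDiffOn ℝ 2 (fun t => ζ t x i) (Set.Ici 0) :=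
      fun x hx => contDiffOn_pi.1 (hsm x hx)
    have hR : ∀ i j, ContDiffOn ℝ 2 (fun t => R t i j) (Set.Ici 0) := fun i j =>
      ((hζ _ (hxsB j) i).sub (hζ x₀ hx₀ i)).div_const ε
    exact ⟨hR, fun i => (hζ x₀ hx₀ i).sub <| ContDiffOn.sum (s := Finset.univ) fun k _ =>
      (hR i k).mul (contDiffOn_const (c := ζ 0 x₀ k))⟩
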